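/- arXiv:2309.07072 — 3 statements merged into one kernel-verified Lean document; each statement's English description precedes it below -/
import Mathlib

section
/- Let n ≥ 1, θ ∈ ℝ, κ > 0, c > 0, and let g : ℝ → ℝ be constant on (−∞, θ] and strictly increasing on [θ, ∞). Define F : ℝⁿ → ℝ by F(x) = Σᵢ₌₁ⁿ [g(θ) − g(κ(xᵢ − c) + θ)] + Σᵢ₌₁ⁿ [g(θ) − g(κ(−xᵢ − c) + θ)]. Then F(x) = 0 if and only if ‖x‖_∞ ≤ c, and F(x) < 0 if and only if ‖x‖_∞ > c. Consequently, the classifier x ↦ sign(F(x)), where sign(s) = 1 for s ≥ 0 and sign(s) = 0 for s < 0, equals 1 exactly on the cube {x : ‖x‖_∞ ≤ c} and 0 elsewhere. -/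
/-- for an activation `g` constant on `(−∞, θ]` and strictly increasing on
`[θ, ∞)`, and `κ, c > 0`, the pre-activation output
`F(x) = Σᵢ [g(θ) − g(κ(xᵢ − c) + θ)] + Σᵢ [g(θ) − g(κ(−xᵢ − c) + θ)]`
satisfies `F(x) = 0 ↔ ‖x‖_∞ ≤ c` and `F(x) < 0 ↔ ‖x‖_∞ > c`; consequently, the
classifier `x ↦ sign(F(x))` (with `sign(s) = 1` for `s ≥ 0` and `0` otherwise) equals `1`
exactly on the cube `{x : ‖x‖_∞ ≤ c}` and `0` elsewhere. -/
theorem stmt_5 (n : ℕ) (hn : 1 ≤ n) (θ κ c : ℝ) (hκ : 0 < κ) (hc : 0 < c)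
    (g : ℝ → ℝ)
    (hconst : ∀ s, s ≤ θ → g s = g θ)
    (hmono : StrictMonoOn g (Set.Ici θ))
    (F : EuclideanSpace ℝ (Fin n) → ℝ)
    (hF : ∀ x, F x = (∑ i, (g θ - g (κ * (x i - c) + θ)))
                   + (∑ i, (g θ - g (κ * (-(x i) - c) + θ)))) :
    ∀ x : EuclideanSpace ℝ (Fin n),
      (F x = 0 ↔ ∀ i, |x i| ≤ c) ∧
      (F x < 0 ↔ ∃ i, c < |x i|) ∧
      ((if 0 ≤ F x then (1 : ℝ) else 0) = 1 ↔ ∀ i, |x i| ≤ c) ∧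
      ((if 0 ≤ F x then (1 : ℝ) else 0) = 0 ↔ ∃ i, c < |x i|) := by
  intro x
  have key : ∀ t : ℝ, g θ - g (κ * t + θ) ≤ 0 ∧ (g θ - g (κ * t + θ) = 0 ↔ t ≤ 0) := by
    intro t
    rcases le_or_gt t 0 with h | h
    · have hle : κ * t + θ ≤ θ := by nlinarith
      rw [hconst _ hle]
      simp [h]
    · have hlt : g θ < g (κ * t + θ) :=
        hmono (Set.mem_Ici.mpr le_rfl) (Set.mem_Ici.mpr (by nlinarith)) (by nlinarith)
      exact ⟨by linarith, ⟨fun h0 => by linarith, fun h0 => by linarith⟩⟩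
  set A := ∑ i, (g θ - g (κ * (x i - c) + θ)) with hAdef
  set B := ∑ i, (g θ - g (κ * (-(x i) - c) + θ)) with hBdef
  have hA0 : A ≤ 0 := Finset.sum_nonpos fun i _ => (key _).1
  have hB0 : B ≤ 0 := Finset.sum_nonpos fun i _ => (key _).1
  have hFx : F x = A + B := hF x
  have hFle : F x ≤ 0 := by rw [hFx]; linarith
  have hzero : F x = 0 ↔ ∀ i, |x i| ≤ c := by
    rw [hFx]
    constructor
    · intro h i
      have hA : A = 0 := by linarith
      have hB : B = 0 := by linarith
      have hA' := (Finset.sum_eq_zero_iff_of_nonpos (fun j _ => (key _).1)).mp hA i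
        (Finset.mem_univ i)
      have hB' := (Finset.sum_eq_zero_iff_of_nonpos (fun j _ => (key _).1)).mp hB i
        (Finset.mem_univ i)
      have h1 : x i - c ≤ 0 := (key _).2.mp hA'
      have h2 : -(x i) - c ≤ 0 := (key _).2.mp hB'
      rw [abs_le]; constructor <;> linarith
    · intro h
      have hA : A = 0 := Finset.sum_eq_zero fun i _ => (key _).2.mpr
        (by have := abs_le.mp (h i); linarith [this.2])
      have hB : B = 0 := Finset.sum_eq_zero fun i _ => (key _).2.mpr
        (by have := abs_le.mp (h i); linarith [this.1])
      linarith
  have hneg : F x < 0 ↔ ∃ i, c < |x i| := by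
    rw [← not_iff_not]
    push_neg
    constructor
    · intro h
      exact hzero.mp (le_antisymm hFle h)
    · intro h
      rw [hzero.mpr h]
  refine ⟨hzero, hneg, ?_, ?_⟩
  · constructor
    · intro h
      by_contra hcon
      have : F x < 0 := hneg.mpr (by push_neg at hcon; simpa [not_le] using hcon)
      simp [not_le.mpr this] at h
    · intro h
      simp [le_antisymm hFle (le_of_eq (hzero.mpr h).symm) ▸ (hzero.mpr h).le, hzero.mpr h]
  · constructor
    · intro h
      by_cases h0 : 0 ≤ F x
      · simp [h0] at h
      · exact hneg.mp (not_le.mp h0)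
    · intro h
      have := hneg.mpr h
      simp [not_le.mpr this]
end

section
/- Let n ≥ 1, θ ∈ ℝ, β > 0, c > 0, L ≥ 0, and let g : ℝ → ℝ be L-Lipschitz, constant on (−∞, θ] and strictly increasing on [θ, ∞). Define F_reg : ℝⁿ → ℝ by F_reg(x) = Σᵢ₌₁ⁿ [g(θ) − g(β(xᵢ − c) + θ)] + Σᵢ₌₁ⁿ [g(θ) − g(β(−xᵢ − c) + θ)]. Then F_reg is Lipschitz with respect to the Euclidean norm with Lipschitz constant at most 2√n·β·L, and sign(F_reg(x)) = 1 if and only if ‖x‖_∞ ≤ c. In particular, for every η > 0 there exists β > 0 such that F_reg is η-Lipschitz while sign ∘ F_reg is still the indicator function of the cube {x : ‖x‖_∞ ≤ c}. -/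
lemma sum_abs_le_sqrt_mul_dist (n : ℕ) (x y : EuclideanSpace ℝ (Fin n)) :
    ∑ i, |x i - y i| ≤ Real.sqrt n * dist x y := by
  have h1 : (∑ i, |x i - y i|) ^ 2 ≤ (n : ℝ) * ∑ i, |x i - y i| ^ 2 := by
    simpa using sq_sum_le_card_mul_sum_sq (s := Finset.univ)
      (f := fun i => |x i - y i|)
  have h0 : 0 ≤ ∑ i, |x i - y i| := Finset.sum_nonneg fun i _ => abs_nonneg _
  have h2 := Real.sqrt_le_sqrt h1
  rw [Real.sqrt_sq h0, Real.sqrt_mul (by positivity)] at h2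
  refine h2.trans (le_of_eq ?_)
  have hd : dist x y = Real.sqrt (∑ i, |x i - y i| ^ 2) := by
    rw [EuclideanSpace.dist_eq]; simp [Real.dist_eq]
  rw [hd]

/-- for an `L`-Lipschitz activation `g` constant on `(−∞, θ]` and strictly
increasing on `[θ, ∞)`, and `c > 0`, the regularised pre-activation map
`F_reg(β)(x) = Σᵢ [g(θ) − g(β(xᵢ − c) + θ)] + Σᵢ [g(θ) − g(β(−xᵢ − c) + θ)]`
is, for every `β > 0`, Lipschitz (w.r.t. the Euclidean norm) with constant at most
`2√n·β·L`, while `sign(F_reg(β)(x)) = 1 ↔ ‖x‖_∞ ≤ c`. In particular, for every `η > 0`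
there is `β > 0` making `F_reg(β)` η-Lipschitz while `sign ∘ F_reg(β)` is still the
indicator of the cube `{x : ‖x‖_∞ ≤ c}`. -/
theorem stmt_6 (n : ℕ) (hn : 1 ≤ n) (θ c L : ℝ) (hc : 0 < c) (hL : 0 ≤ L)
    (g : ℝ → ℝ)
    (hLip : LipschitzWith L.toNNReal g)
    (hconst : ∀ s, s ≤ θ → g s = g θ)
    (hmono : StrictMonoOn g (Set.Ici θ))
    (Freg : ℝ → EuclideanSpace ℝ (Fin n) → ℝ)
    (hF : ∀ β x, Freg β x = (∑ i, (g θ - g (β * (x i - c) + θ)))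
                          + (∑ i, (g θ - g (β * (-(x i) - c) + θ)))) :
    (∀ β : ℝ, 0 < β →
      LipschitzWith (2 * Real.sqrt n * β * L).toNNReal (Freg β) ∧
      ∀ x, ((if 0 ≤ Freg β x then (1 : ℝ) else 0) = 1 ↔ ∀ i, |x i| ≤ c)) ∧
    (∀ η : ℝ, 0 < η → ∃ β : ℝ, 0 < β ∧
      LipschitzWith η.toNNReal (Freg β) ∧
      ∀ x, ((if 0 ≤ Freg β x then (1 : ℝ) else 0) = 1 ↔ ∀ i, |x i| ≤ c)) := by
  -- g θ is a global minimum
  have gle : ∀ s : ℝ, g θ ≤ g s := by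
    intro s
    rcases le_or_gt s θ with h | h
    · rw [hconst s h]
    · exact (hmono (Set.self_mem_Ici) (le_of_lt h) h).le
  have glt : ∀ s : ℝ, θ < s → g θ < g s := fun s h =>
    hmono Set.self_mem_Ici h.le h
  have gdist : ∀ a b : ℝ, |g a - g b| ≤ L * |a - b| := by
    intro a b
    have := hLip.dist_le_mul a b
    simpa [Real.dist_eq, Real.coe_toNNReal L hL] using this
  -- main claims for each β > 0
  have main : ∀ β : ℝ, 0 < β →
      LipschitzWith (2 * Real.sqrt n * β * L).toNNReal (Freg β) ∧
      ∀ x, ((if 0 ≤ Freg β x then (1 : ℝ) else 0) = 1 ↔ ∀ i, |x i| ≤ c) := by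
    intro β hβ
    constructor
    · -- Lipschitz
      have hK : (0:ℝ) ≤ 2 * Real.sqrt n * β * L := by positivity
      apply LipschitzWith.of_dist_le_mul
      intro x y
      rw [Real.coe_toNNReal _ hK, Real.dist_eq, hF, hF]
      have key : |Freg β x - Freg β y| ≤ 2 * β * L * ∑ i, |x i - y i| := by
        rw [hF, hF]
        have e : (∑ i, (g θ - g (β * (x i - c) + θ)))
              + (∑ i, (g θ - g (β * (-(x i) - c) + θ)))
              - ((∑ i, (g θ - g (β * (y i - c) + θ)))
              + (∑ i, (g θ - g (β * (-(y i) - c) + θ))))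
            = (∑ i, (g (β * (y i - c) + θ) - g (β * (x i - c) + θ)))
              + (∑ i, (g (β * (-(y i) - c) + θ) - g (β * (-(x i) - c) + θ))) := by
          simp only [← Finset.sum_add_distrib, ← Finset.sum_sub_distrib]
          exact Finset.sum_congr rfl fun i _ => by ring
        rw [e]
        calc |(∑ i, (g (β * (y i - c) + θ) - g (β * (x i - c) + θ)))
              + (∑ i, (g (β * (-(y i) - c) + θ) - g (β * (-(x i) - c) + θ)))|
            ≤ (∑ i, |g (β * (y i - c) + θ) - g (β * (x i - c) + θ)|)
              + (∑ i, |g (β * (-(y i) - c) + θ) - g (β * (-(x i) - c) + θ)|) :=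
              (abs_add_le _ _).trans (add_le_add (Finset.abs_sum_le_sum_abs _ _)
                (Finset.abs_sum_le_sum_abs _ _))
          _ ≤ (∑ i, L * (β * |x i - y i|)) + (∑ i, L * (β * |x i - y i|)) := by
              refine add_le_add (Finset.sum_le_sum fun i _ => ?_)
                (Finset.sum_le_sum fun i _ => ?_)
              · refine (gdist _ _).trans (le_of_eq ?_)
                rw [show β * (y i - c) + θ - (β * (x i - c) + θ)
                    = β * (y i - x i) by ring, abs_mul, abs_of_pos hβ,
                  abs_sub_comm]
              · refine (gdist _ _).trans (le_of_eq ?_)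
                rw [show β * (-(y i) - c) + θ - (β * (-(x i) - c) + θ)
                    = β * (x i - y i) by ring, abs_mul, abs_of_pos hβ]
          _ = 2 * β * L * ∑ i, |x i - y i| := by
              rw [← Finset.sum_add_distrib, Finset.mul_sum]
              exact Finset.sum_congr rfl fun i _ => by ring
      rw [hF, hF] at key
      refine key.trans ?_
      calc 2 * β * L * ∑ i, |x i - y i|
          ≤ 2 * β * L * (Real.sqrt n * dist x y) := by
            exact mul_le_mul_of_nonneg_left (sum_abs_le_sqrt_mul_dist n x y)
              (by positivity)
        _ = 2 * Real.sqrt n * β * L * dist x y := by ring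
    · -- sign characterization
      intro x
      have hsum : (0 ≤ Freg β x ↔ ∀ i, |x i| ≤ c) := by
        constructor
        · intro h i
          by_contra hcon
          push_neg at hcon
          have hneg : Freg β x < 0 := by
            rw [hF]
            have nonpos1 : ∀ i : Fin n, g θ - g (β * (x i - c) + θ) ≤ 0 :=
              fun i => sub_nonpos.mpr (gle _)
            have nonpos2 : ∀ i : Fin n, g θ - g (β * (-(x i) - c) + θ) ≤ 0 :=
              fun i => sub_nonpos.mpr (gle _)
            have s1 : (∑ i, (g θ - g (β * (x i - c) + θ))) ≤ 0 :=
              Finset.sum_nonpos fun i _ => nonpos1 i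
            have s2 : (∑ i, (g θ - g (β * (-(x i) - c) + θ))) ≤ 0 :=
              Finset.sum_nonpos fun i _ => nonpos2 i
            rcases lt_abs.mp hcon with h1 | h1
            · have hterm : g θ - g (β * (x i - c) + θ) < 0 := by
                have : θ < β * (x i - c) + θ := by nlinarith
                linarith [glt _ this]
              have : (∑ j, (g θ - g (β * (x j - c) + θ))) < ∑ _j : Fin n, (0:ℝ) :=
                Finset.sum_lt_sum (fun j _ => nonpos1 j)
                  ⟨i, Finset.mem_univ i, hterm⟩
              simp only [Finset.sum_const_zero] at this
              linarith
            · have hterm : g θ - g (β * (-(x i) - c) + θ) < 0 := by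
                have : θ < β * (-(x i) - c) + θ := by nlinarith
                linarith [glt _ this]
              have : (∑ j, (g θ - g (β * (-(x j) - c) + θ))) < ∑ _j : Fin n, (0:ℝ) :=
                Finset.sum_lt_sum (fun j _ => nonpos2 j)
                  ⟨i, Finset.mem_univ i, hterm⟩
              simp only [Finset.sum_const_zero] at this
              linarith
          linarith
        · intro h
          rw [hF]
          have z1 : ∀ i : Fin n, g θ - g (β * (x i - c) + θ) = 0 := by
            intro i
            have h1 : x i - c ≤ 0 := by
              have := (abs_le.mp (h i)).2; linarith
            have : β * (x i - c) + θ ≤ θ := by nlinarith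
            rw [hconst _ this, sub_self]
          have z2 : ∀ i : Fin n, g θ - g (β * (-(x i) - c) + θ) = 0 := by
            intro i
            have h1 : -(x i) - c ≤ 0 := by
              have := (abs_le.mp (h i)).1; linarith
            have : β * (-(x i) - c) + θ ≤ θ := by nlinarith
            rw [hconst _ this, sub_self]
          simp [z1, z2]
      constructor
      · intro h
        by_contra hcon
        have : ¬ (0 ≤ Freg β x) := fun h0 => hcon (hsum.mp h0)
        rw [if_neg this] at h
        norm_num at h
      · intro h
        rw [if_pos (hsum.mpr h)]
  refine ⟨main, ?_⟩
  intro η hη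
  refine ⟨η / (2 * Real.sqrt n * (L + 1)), by positivity, ?_, (main _ (by positivity)).2⟩
  refine ((main _ (by positivity)).1).weaken ?_
  have hs : (0:ℝ) < Real.sqrt n := Real.sqrt_pos.mpr (by exact_mod_cast hn)
  rw [Real.toNNReal_le_toNNReal_iff hη.le]
  calc 2 * Real.sqrt n * (η / (2 * Real.sqrt n * (L + 1))) * L
      = η * (L / (L + 1)) := by field_simp
    _ ≤ η * 1 := by
        refine mul_le_mul_of_nonneg_left ?_ hη.le
        rw [div_le_one (by linarith)]; linarith
    _ = η := mul_one η
end

section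
/- Let n ≥ 1, c > 0, r > 0, and let x ∈ ℝⁿ satisfy |xᵢ| = c for every coordinate i (a vertex of the cube [−c,c]ⁿ). Then the Lebesgue volume of the set {ζ ∈ ℝⁿ : ‖ζ‖ ≤ r and ‖x + ζ‖_∞ > c} is at least (1 − 2^{−n}) times the volume of the closed ball B(0, r). Equivalently, if ζ is drawn from the equidistribution on B(0,r), then with probability at least 1 − 2^{−n} the perturbed point x + ζ lies outside the cube [−c,c]ⁿ, so the indicator classifier f of the cube satisfies |f(x) − f(x+ζ)| = 1 with probability at least 1 − 2^{−n}. -/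
/-!
If `x + ζ` stays in the cube `[-c, c]ⁿ` while `|xᵢ| = c`, then every coordinate of `ζ` points
back into the cube, so `ζ` lies in the closed orthant opposite to the vertex `x`. The `2ⁿ`
closed orthants are images of each other under coordinate sign flips, which are isometries
fixing the ball `B(0, r)`, and they overlap only in coordinate hyperplanes, which are null.
Hence each orthant carries at most a `2⁻ⁿ` share of the volume of the ball, and the rest of
the ball moves `x` out of the cube.
-/

open MeasureTheory Metric
open scoped ENNReal

variable {ι : Type*} [Fintype ι]

noncomputable def signFlip (s : ι → Bool) :
    EuclideanSpace ℝ ι ≃ₗᵢ[ℝ] EuclideanSpace ℝ ι :=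
  LinearIsometryEquiv.piLpCongrRight 2 fun i =>
    if s i then LinearIsometryEquiv.neg ℝ else LinearIsometryEquiv.refl ℝ ℝ

@[simp]
lemma signFlip_apply (s : ι → Bool) (ζ : EuclideanSpace ℝ ι) (i : ι) :
    signFlip s ζ i = if s i then -ζ i else ζ i := by
  by_cases h : s i <;> simp [signFlip, h]

/-- The closed orthant where `ζ i ≤ 0` for `s i` and `0 ≤ ζ i` otherwise. -/
def closedOrthant (s : ι → Bool) : Set (EuclideanSpace ℝ ι) :=
  signFlip s ⁻¹' {ζ | ∀ i, 0 ≤ ζ i}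

lemma isClosed_closedOrthant (s : ι → Bool) : IsClosed (closedOrthant s) := by
  simp only [closedOrthant, Set.ofPred_forall]
  exact (isClosed_iInter fun i => isClosed_le continuous_const
    (EuclideanSpace.proj i).continuous).preimage (signFlip s).continuous

lemma volume_setOf_apply_eq_zero (i : ι) :
    volume {ζ : EuclideanSpace ℝ ι | ζ i = 0} = 0 := by
  classical
  have hne : LinearMap.ker (EuclideanSpace.projₗ (𝕜 := ℝ) i) ≠ ⊤ := by
    intro h
    have h1 : EuclideanSpace.single i (1 : ℝ) ∈
        LinearMap.ker (EuclideanSpace.projₗ (𝕜 := ℝ) i) := h ▸ Submodule.mem_top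
    simp at h1
  exact Measure.addHaar_submodule _ _ hne

lemma closedOrthant_inter_subset {s t : ι → Bool} {i : ι} (h : s i ≠ t i) :
    closedOrthant s ∩ closedOrthant t ⊆ {ζ | ζ i = 0} := by
  rintro ζ ⟨hs, ht⟩
  have hsi := hs i
  have hti := ht i
  simp only [signFlip_apply] at hsi hti
  cases hs' : s i <;> cases ht' : t i <;> simp_all <;> linarith

lemma aedisjoint_closedOrthant {s t : ι → Bool} (h : s ≠ t) :
    AEDisjoint volume (closedOrthant s) (closedOrthant t) := by
  obtain ⟨i, hi⟩ := Function.ne_iff.1 h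
  exact measure_mono_null (closedOrthant_inter_subset hi) (volume_setOf_apply_eq_zero i)

lemma closedBall_inter_closedOrthant (r : ℝ) (s : ι → Bool) :
    closedBall 0 r ∩ closedOrthant s =
      signFlip s ⁻¹' (closedBall 0 r ∩ closedOrthant fun _ => false) := by
  simp [closedOrthant, Set.preimage_inter]

lemma volume_closedBall_inter_closedOrthant_le (r : ℝ) (s : ι → Bool) :
    volume (closedBall (0 : EuclideanSpace ℝ ι) r ∩ closedOrthant s) ≤
      (2 ^ Fintype.card ι)⁻¹ * volume (closedBall (0 : EuclideanSpace ℝ ι) r) := by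
  classical
  have hsymm : ∀ t, volume (closedBall (0 : EuclideanSpace ℝ ι) r ∩ closedOrthant t) =
      volume (closedBall (0 : EuclideanSpace ℝ ι) r ∩ closedOrthant s) := by
    intro t
    rw [closedBall_inter_closedOrthant r t, closedBall_inter_closedOrthant r s,
      (signFlip t).measurePreserving.measure_preimage,
      (signFlip s).measurePreserving.measure_preimage]
    all_goals exact (isClosed_closedBall.inter (isClosed_closedOrthant _)).nullMeasurableSet
  have hsum := tsum_meas_le_meas_iUnion_of_disjoint₀ volume
    (As := fun t => closedBall (0 : EuclideanSpace ℝ ι) r ∩ closedOrthant t)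
    (fun t => (isClosed_closedBall.inter (isClosed_closedOrthant t)).nullMeasurableSet)
    (fun t u h => (aedisjoint_closedOrthant h).mono Set.inter_subset_right Set.inter_subset_right)
  rw [tsum_fintype] at hsum
  simp only [hsymm, Finset.sum_const, Finset.card_univ, Fintype.card_fun, Fintype.card_bool,
    nsmul_eq_mul] at hsum
  rw [← ENNReal.mul_le_iff_le_inv (by positivity) (by simp)]
  exact_mod_cast hsum.trans (measure_mono (Set.iUnion_subset fun _ => Set.inter_subset_left))

lemma nonneg_ite_neg_of_abs_add_le {a b : ℝ} (h : |a + b| ≤ |a|) :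
    0 ≤ if 0 < a then -b else b := by
  split_ifs with ha
  · rw [abs_of_pos ha] at h; linarith [le_abs_self (a + b)]
  · rw [abs_of_nonpos (not_lt.1 ha)] at h; linarith [neg_abs_le (a + b)]

lemma setOf_abs_add_le_subset_closedOrthant (x : EuclideanSpace ℝ ι) :
    {ζ : EuclideanSpace ℝ ι | ∀ i, |x i + ζ i| ≤ |x i|} ⊆
      closedOrthant fun i => decide (0 < x i) := fun ζ hζ i => by
  simpa using nonneg_ite_neg_of_abs_add_le (hζ i)

theorem stmt_11_general (n : ℕ) (c r : ℝ)
    (x : EuclideanSpace ℝ (Fin n)) (hx : ∀ i, |x i| = c)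
    (f : EuclideanSpace ℝ (Fin n) → ℝ)
    (hf : ∀ y, f y = if ∀ i, |y i| ≤ c then (1 : ℝ) else 0) :
    (1 - ((2 : ℝ≥0∞) ^ n)⁻¹) *
        volume (Metric.closedBall (0 : EuclideanSpace ℝ (Fin n)) r) ≤
      volume {ζ : EuclideanSpace ℝ (Fin n) | ‖ζ‖ ≤ r ∧ ∃ i, c < |x i + ζ i|} ∧
    (1 - ((2 : ℝ≥0∞) ^ n)⁻¹) *
        volume (Metric.closedBall (0 : EuclideanSpace ℝ (Fin n)) r) ≤
      volume {ζ : EuclideanSpace ℝ (Fin n) | ‖ζ‖ ≤ r ∧ |f x - f (x + ζ)| = 1} := by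
  set B := closedBall (0 : EuclideanSpace ℝ (Fin n)) r
  set O := closedOrthant fun i => decide (0 < x i)
  have hescape : B \ O ⊆ {ζ | ‖ζ‖ ≤ r ∧ ∃ i, c < |x i + ζ i|} := by
    rintro ζ ⟨hζB, hζO⟩
    refine ⟨by simpa [B] using hζB, ?_⟩
    by_contra! h
    exact hζO (setOf_abs_add_le_subset_closedOrthant x fun i => (h i).trans (hx i).ge)
  have hgood : (1 - ((2 : ℝ≥0∞) ^ n)⁻¹) * volume B ≤
      volume {ζ : EuclideanSpace ℝ (Fin n) | ‖ζ‖ ≤ r ∧ ∃ i, c < |x i + ζ i|} := by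
    have hO : volume (B ∩ O) ≤ (2 ^ n)⁻¹ * volume B := by
      have h := volume_closedBall_inter_closedOrthant_le r fun i => decide (0 < x i)
      rwa [Fintype.card_fin] at h
    rw [ENNReal.sub_mul fun _ _ => measure_closedBall_lt_top.ne, one_mul]
    calc _ ≤ volume B - volume (B ∩ O) := tsub_le_tsub_left hO _
      _ ≤ volume (B \ (B ∩ O)) := le_measure_sdiff
      _ ≤ _ := measure_mono (by rw [Set.sdiff_self_inter]; exact hescape)
  refine ⟨hgood, hgood.trans (measure_mono ?_)⟩
  rintro ζ ⟨hζr, i, hi⟩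
  have hout : ¬ ∀ j, |x j + ζ j| ≤ c := fun h => (h i).not_gt hi
  exact ⟨hζr, by simp [hf, hx, hout]⟩

/-- if `x` is a vertex of the cube `[−c,c]ⁿ` (`|xᵢ| = c` for all `i`,
`c > 0`) and `r > 0`, then the volume of `{ζ : ‖ζ‖ ≤ r, ‖x + ζ‖_∞ > c}` is at least
`(1 − 2⁻ⁿ)` times the volume of the closed ball `B(0,r)`; equivalently, a perturbation
`ζ` equidistributed on `B(0,r)` moves `x` outside the cube with probability at least
`1 − 2⁻ⁿ`, so the cube-indicator classifier `f` satisfies `|f(x) − f(x+ζ)| = 1` with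
probability at least `1 − 2⁻ⁿ`. -/
theorem stmt_11 (n : ℕ) (hn : 1 ≤ n) (c r : ℝ) (hc : 0 < c) (hr : 0 < r)
    (x : EuclideanSpace ℝ (Fin n)) (hx : ∀ i, |x i| = c)
    (f : EuclideanSpace ℝ (Fin n) → ℝ)
    (hf : ∀ y, f y = if ∀ i, |y i| ≤ c then (1 : ℝ) else 0) :
    (1 - ((2 : ℝ≥0∞) ^ n)⁻¹) *
        volume (Metric.closedBall (0 : EuclideanSpace ℝ (Fin n)) r) ≤
      volume {ζ : EuclideanSpace ℝ (Fin n) | ‖ζ‖ ≤ r ∧ ∃ i, c < |x i + ζ i|} ∧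
    (1 - ((2 : ℝ≥0∞) ^ n)⁻¹) *
        volume (Metric.closedBall (0 : EuclideanSpace ℝ (Fin n)) r) ≤
      volume {ζ : EuclideanSpace ℝ (Fin n) | ‖ζ‖ ≤ r ∧ |f x - f (x + ζ)| = 1} :=
  stmt_11_general n c r x hx f hf
end
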